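/- Let $\mathcal{E}$ be an abelian category with injective envelopes, and let $g\colon J \to E$ be a morphism where $J$ is injective and $E$ has no nonzero injective direct summands. Then the kernel inclusion $\ker g \to J$ is an injective envelope of $\ker g$, and consequently $g$ lies in the radical of $\mathcal{E}$. -/
import Mathlib

open CategoryTheory Limits

universe v u

variable {E : Type u} [Category.{v} E] [Abelian E]

/-- A morphism `f : A ⟶ I` is an injective envelope if it is a monomorphism into an
injective object which is left minimal. -/
def IsInjectiveEnvelope {A I : E} (f : A ⟶ I) : Prop :=
  Mono f ∧ Injective I ∧ ∀ φ : I ⟶ I, f ≫ φ = f → IsIso φ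

/-- Let `E` be an abelian category with injective envelopes and
`g : J ⟶ M` a morphism with `J` injective and `M` without nonzero injective direct summands.
Then the kernel inclusion `ker g ⟶ J` is an injective envelope, and `g` lies in the
radical: `𝟙 M - k ≫ g` is invertible for every `k : M ⟶ J`. -/
theorem kernel_inclusion_injective_envelope_and_radical
    (henv : ∀ A : E, ∃ (I : E) (f : A ⟶ I), IsInjectiveEnvelope f)
    {J M : E} (g : J ⟶ M) (hJ : Injective J)
    (hM : ∀ (I : E), Injective I → ∀ (s : I ⟶ M) (r : M ⟶ I), s ≫ r = 𝟙 I → IsZero I) :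
    IsInjectiveEnvelope (kernel.ι g) ∧ ∀ k : M ⟶ J, IsIso (𝟙 M - k ≫ g) := by
  obtain ⟨I, f, hf_mono, hf_inj, hf_min⟩ := henv (kernel g)
  haveI := hf_mono
  haveI := hf_inj
  haveI := hJ
  -- extend `kernel.ι g` along `f`
  let u : I ⟶ J := Injective.factorThru (kernel.ι g) f
  have hu : f ≫ u = kernel.ι g := Injective.comp_factorThru _ _
  -- `u` is mono by essentiality of the injective envelope `f`
  haveI hfu_mono : Mono (f ≫ u) := by rw [hu]; infer_instance
  have humono : Mono u := by
    let t : J ⟶ I := Injective.factorThru f (f ≫ u)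
    have ht : (f ≫ u) ≫ t = f := Injective.comp_factorThru _ _
    haveI : IsIso (u ≫ t) := hf_min _ (by rw [← Category.assoc]; exact ht)
    haveI : Mono (u ≫ t) := inferInstance
    exact mono_of_mono u t
  haveI := humono
  -- `u` is a split mono
  let r : J ⟶ I := Injective.factorThru (𝟙 I) u
  have hr : u ≫ r = 𝟙 I := Injective.comp_factorThru _ _
  -- the cokernel of `u` is a retract of `J`
  let p : J ⟶ cokernel u := cokernel.π u
  let s : cokernel u ⟶ J := cokernel.desc u (𝟙 J - r ≫ u) (by
    simp [Preadditive.comp_sub, ← Category.assoc, hr])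
  have hps : p ≫ s = 𝟙 J - r ≫ u := cokernel.π_desc _ _ _
  have hup : u ≫ p = 0 := cokernel.condition u
  have hsp : s ≫ p = 𝟙 (cokernel u) := by
    rw [← cancel_epi p, ← Category.assoc, hps]
    simp [Preadditive.sub_comp, Category.assoc, hup]
  -- the cokernel of `u` is injective, being a retract of `J`
  haveI hQinj : Injective (cokernel u) := by
    constructor
    intro X Y φ m hm
    obtain ⟨ψ, hψ⟩ := Injective.factors (φ ≫ s) m
    exact ⟨ψ ≫ p, by rw [← Category.assoc, hψ, Category.assoc, hsp, Category.comp_id]⟩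
  -- `s ≫ g` is mono
  haveI hsg : Mono (s ≫ g) := by
    apply Preadditive.mono_of_cancel_zero
    intro T z hz
    rw [← Category.assoc] at hz
    have ht : kernel.lift g (z ≫ s) hz ≫ kernel.ι g = z ≫ s := kernel.lift_ι _ _ _
    calc z = (z ≫ s) ≫ p := by rw [Category.assoc, hsp, Category.comp_id]
      _ = (kernel.lift g (z ≫ s) hz ≫ kernel.ι g) ≫ p := by rw [ht]
      _ = 0 := by rw [← hu]; simp only [Category.assoc, hup]; simp
  -- so the cokernel of `u` is an injective direct summand of `M`, hence zero
  obtain ⟨r', hr'⟩ := Injective.factors (𝟙 (cokernel u)) (s ≫ g)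
  have hQzero : IsZero (cokernel u) := hM _ hQinj (s ≫ g) r' hr'
  -- hence `u` is epi, hence iso
  have hp0 : p = 0 := hQzero.eq_of_tgt _ _
  haveI : Epi u := Abelian.epi_of_cokernel_π_eq_zero u hp0
  haveI hu_iso : IsIso u := isIso_of_mono_of_epi u
  -- the kernel inclusion is an injective envelope
  have env : IsInjectiveEnvelope (kernel.ι g) := by
    refine ⟨inferInstance, hJ, fun φ hφ => ?_⟩
    have hψ : f ≫ (u ≫ φ ≫ inv u) = f := by
      rw [← Category.assoc, hu, ← Category.assoc, hφ, ← hu, Category.assoc,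
        IsIso.hom_inv_id, Category.comp_id]
    haveI : IsIso (u ≫ φ ≫ inv u) := hf_min _ hψ
    have : φ = inv u ≫ (u ≫ φ ≫ inv u) ≫ u := by
      simp
    rw [this]
    infer_instance
  refine ⟨env, fun k => ?_⟩
  -- radical part
  have hh : kernel.ι g ≫ (𝟙 J - g ≫ k) = kernel.ι g := by
    simp [Preadditive.comp_sub, ← Category.assoc, kernel.condition]
  haveI hiso : IsIso (𝟙 J - g ≫ k) := env.2.2 _ hh
  set h : J ⟶ J := 𝟙 J - g ≫ k with hdef
  have e1 : g ≫ k = 𝟙 J - h := by rw [hdef]; abel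
  refine ⟨⟨𝟙 M + k ≫ inv h ≫ g, ?_, ?_⟩⟩
  · have key : k ≫ g ≫ k ≫ inv h ≫ g = k ≫ inv h ≫ g - k ≫ g := by
      calc k ≫ g ≫ k ≫ inv h ≫ g = k ≫ ((g ≫ k) ≫ inv h) ≫ g := by
            simp only [Category.assoc]
        _ = k ≫ ((𝟙 J - h) ≫ inv h) ≫ g := by rw [e1]
        _ = k ≫ (inv h - 𝟙 J) ≫ g := by rw [Preadditive.sub_comp, Category.id_comp, IsIso.hom_inv_id]
        _ = k ≫ inv h ≫ g - k ≫ g := by rw [Preadditive.sub_comp, Preadditive.comp_sub, Category.id_comp]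
    simp only [Preadditive.comp_add, Preadditive.add_comp, Preadditive.sub_comp,
      Preadditive.comp_sub, Category.id_comp, Category.comp_id, Category.assoc]
    rw [key]
    abel
  · have key : k ≫ inv h ≫ g ≫ k ≫ g = k ≫ inv h ≫ g - k ≫ g := by
      calc k ≫ inv h ≫ g ≫ k ≫ g = k ≫ (inv h ≫ (g ≫ k)) ≫ g := by
            simp only [Category.assoc]
        _ = k ≫ (inv h ≫ (𝟙 J - h)) ≫ g := by rw [e1]
        _ = k ≫ (inv h - 𝟙 J) ≫ g := by rw [Preadditive.comp_sub, Category.comp_id, IsIso.inv_hom_id]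
        _ = k ≫ inv h ≫ g - k ≫ g := by rw [Preadditive.sub_comp, Preadditive.comp_sub, Category.id_comp]
    simp only [Preadditive.comp_add, Preadditive.add_comp, Preadditive.sub_comp,
      Preadditive.comp_sub, Category.id_comp, Category.comp_id, Category.assoc]
    rw [key]
    abel
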